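/- Let X(u,v) = (e^{vJ}α(u), φ(u), hv) be an h-pitched helicoidal surface in ℍ²×ℝ with generating curve σ = (α, φ) ⊂ ℍ², α unit-speed. With a = μφ', b = (1+μ²)/φ, c = −φ'/h, the mean curvature satisfies H = (ρ/φ)·[(φ²k − μ(1+μ²))(h² + r²) + μ(1+μ²)φ²] / (2(τ² + h²(1+μ²))), where ρ = (a² + b² − μ² + c²)^{−1/2}, k is the curvature of α, τ = ⟨α,T⟩, μ = ⟨α,N⟩, r² = τ² + μ². -/

import Mathlib

open Filter

noncomputable section

/-- `τ = ⟨α, T⟩` for the unit-speed generating plane curve `α = (α₁, α₂)`. -/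
def tauF (α₁ α₂ : ℝ → ℝ) (u : ℝ) : ℝ := α₁ u * deriv α₁ u + α₂ u * deriv α₂ u

/-- `μ = ⟨α, N⟩`, `N = JT`. -/
def muF (α₁ α₂ : ℝ → ℝ) (u : ℝ) : ℝ := α₂ u * deriv α₁ u - α₁ u * deriv α₂ u

/-- curvature `k = ⟨α'', N⟩` of the plane curve `α`. -/
def curvF (α₁ α₂ : ℝ → ℝ) (u : ℝ) : ℝ :=
  deriv (deriv α₁) u * (-(deriv α₂ u)) + deriv (deriv α₂) u * deriv α₁ u

/-- first component of the helicoidal parameterization `X(u,v) = (e^{vJ}α(u), φ(u), hv)`. -/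
def X1 (α₁ α₂ : ℝ → ℝ) (u v : ℝ) : ℝ := Real.cos v * α₁ u - Real.sin v * α₂ u

/-- second component of `X`. -/
def X2 (α₁ α₂ : ℝ → ℝ) (u v : ℝ) : ℝ := Real.sin v * α₁ u + Real.cos v * α₂ u

/-- `E = ⟨X_u, X_u⟩` in the Lorentzian metric `dx₁² + dx₂² − dx₃² + dt²` of `𝕃³×ℝ`. -/
def Ecoef (h : ℝ) (α₁ α₂ φ : ℝ → ℝ) (u v : ℝ) : ℝ :=
  (deriv (fun u => X1 α₁ α₂ u v) u) ^ 2 + (deriv (fun u => X2 α₁ α₂ u v) u) ^ 2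
    - (deriv φ u) ^ 2 + (deriv (fun _ : ℝ => h * v) u) ^ 2

/-- `F = ⟨X_u, X_v⟩`. -/
def Fcoef (h : ℝ) (α₁ α₂ φ : ℝ → ℝ) (u v : ℝ) : ℝ :=
  deriv (fun u => X1 α₁ α₂ u v) u * deriv (fun v => X1 α₁ α₂ u v) v
  + deriv (fun u => X2 α₁ α₂ u v) u * deriv (fun v => X2 α₁ α₂ u v) v
  - deriv φ u * deriv (fun _ : ℝ => φ u) v
  + deriv (fun _ : ℝ => h * v) u * deriv (fun v => h * v) v

/-- `G = ⟨X_v, X_v⟩`. -/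
def Gcoef (h : ℝ) (α₁ α₂ φ : ℝ → ℝ) (u v : ℝ) : ℝ :=
  (deriv (fun v => X1 α₁ α₂ u v) v) ^ 2 + (deriv (fun v => X2 α₁ α₂ u v) v) ^ 2
    - (deriv (fun _ : ℝ => φ u) v) ^ 2 + (deriv (fun v => h * v) v) ^ 2

/-- `a = μ φ'`. -/
def aF (α₁ α₂ φ : ℝ → ℝ) (u : ℝ) : ℝ := muF α₁ α₂ u * deriv φ u

/-- `b = (1 + μ²)/φ`. -/
def bF (α₁ α₂ φ : ℝ → ℝ) (u : ℝ) : ℝ := (1 + (muF α₁ α₂ u) ^ 2) / φ u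

/-- `c = −φ'/h`. -/
def cF (h : ℝ) (φ : ℝ → ℝ) (u : ℝ) : ℝ := -(deriv φ u) / h

/-- `ρ = (a² + b² − μ² + c²)^{-1/2}`. -/
def rhoF (h : ℝ) (α₁ α₂ φ : ℝ → ℝ) (u : ℝ) : ℝ :=
  (Real.sqrt ((aF α₁ α₂ φ u) ^ 2 + (bF α₁ α₂ φ u) ^ 2 - (muF α₁ α₂ u) ^ 2
    + (cF h φ u) ^ 2))⁻¹

/-- first component of the unit normal `η = ρ(e^{vJ}(aT + bN), μ, c)`. -/
def eta1 (h : ℝ) (α₁ α₂ φ : ℝ → ℝ) (u v : ℝ) : ℝ :=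
  rhoF h α₁ α₂ φ u *
    (Real.cos v * (aF α₁ α₂ φ u * deriv α₁ u + bF α₁ α₂ φ u * (-(deriv α₂ u)))
     - Real.sin v * (aF α₁ α₂ φ u * deriv α₂ u + bF α₁ α₂ φ u * deriv α₁ u))

/-- second component of `η`. -/
def eta2 (h : ℝ) (α₁ α₂ φ : ℝ → ℝ) (u v : ℝ) : ℝ :=
  rhoF h α₁ α₂ φ u *
    (Real.sin v * (aF α₁ α₂ φ u * deriv α₁ u + bF α₁ α₂ φ u * (-(deriv α₂ u)))
     + Real.cos v * (aF α₁ α₂ φ u * deriv α₂ u + bF α₁ α₂ φ u * deriv α₁ u))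

/-- third component of `η`. -/
def eta3 (h : ℝ) (α₁ α₂ φ : ℝ → ℝ) (u : ℝ) : ℝ := rhoF h α₁ α₂ φ u * muF α₁ α₂ u

/-- fourth (vertical) component of `η`. -/
def eta4 (h : ℝ) (α₁ α₂ φ : ℝ → ℝ) (u : ℝ) : ℝ := rhoF h α₁ α₂ φ u * cF h φ u

/-- `e = ⟨X_uu, η⟩`. -/
def ecoef (h : ℝ) (α₁ α₂ φ : ℝ → ℝ) (u v : ℝ) : ℝ :=
  deriv (fun u => deriv (fun u => X1 α₁ α₂ u v) u) u * eta1 h α₁ α₂ φ u v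
  + deriv (fun u => deriv (fun u => X2 α₁ α₂ u v) u) u * eta2 h α₁ α₂ φ u v
  - deriv (deriv φ) u * eta3 h α₁ α₂ φ u
  + deriv (fun u => deriv (fun _ : ℝ => h * v) u) u * eta4 h α₁ α₂ φ u

/-- `f = ⟨X_uv, η⟩`. -/
def fcoef (h : ℝ) (α₁ α₂ φ : ℝ → ℝ) (u v : ℝ) : ℝ :=
  deriv (fun v => deriv (fun u => X1 α₁ α₂ u v) u) v * eta1 h α₁ α₂ φ u v
  + deriv (fun v => deriv (fun u => X2 α₁ α₂ u v) u) v * eta2 h α₁ α₂ φ u v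
  - deriv (fun _ : ℝ => deriv φ u) v * eta3 h α₁ α₂ φ u
  + deriv (fun v => deriv (fun _ : ℝ => h * v) u) v * eta4 h α₁ α₂ φ u

/-- `g = ⟨X_vv, η⟩`. -/
def gcoef (h : ℝ) (α₁ α₂ φ : ℝ → ℝ) (u v : ℝ) : ℝ :=
  deriv (fun v => deriv (fun v => X1 α₁ α₂ u v) v) v * eta1 h α₁ α₂ φ u v
  + deriv (fun v => deriv (fun v => X2 α₁ α₂ u v) v) v * eta2 h α₁ α₂ φ u v
  - deriv (fun v => deriv (fun _ : ℝ => φ u) v) v * eta3 h α₁ α₂ φ u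
  + deriv (fun v => deriv (fun v => h * v) v) v * eta4 h α₁ α₂ φ u

/-- mean curvature `H = (Eg − 2fF + Ge)/(2(EG − F²))`. -/
def Hmean (h : ℝ) (α₁ α₂ φ : ℝ → ℝ) (u v : ℝ) : ℝ :=
  (Ecoef h α₁ α₂ φ u v * gcoef h α₁ α₂ φ u v
    - 2 * fcoef h α₁ α₂ φ u v * Fcoef h α₁ α₂ φ u v
    + Gcoef h α₁ α₂ φ u v * ecoef h α₁ α₂ φ u v) /
  (2 * (Ecoef h α₁ α₂ φ u v * Gcoef h α₁ α₂ φ u v - (Fcoef h α₁ α₂ φ u v) ^ 2))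

/-- the rotator condition `H = ⟨Jπ(X), η⟩`, with `Jπ(X) = (−X₂, X₁, 0, 0)`. -/
def IsRotator (h : ℝ) (α₁ α₂ φ : ℝ → ℝ) : Prop :=
  ∀ u v : ℝ, Hmean h α₁ α₂ φ u v =
    -(X2 α₁ α₂ u v) * eta1 h α₁ α₂ φ u v + X1 α₁ α₂ u v * eta2 h α₁ α₂ φ u v

end

/-! The surface is the orbit of the generating curve under the screw motion
`(x, t) ↦ (e^{vJ} x, t + h v)`. The rotation `e^{vJ}` preserves the inner product and the
determinant of horizontal vectors, so the coefficients of both fundamental forms do not depend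
on `v`: `E = 1 - φ'² = (1 + μ²)/φ²`, `F = -μ`, `G = r² + h²`, `e = ρ(bk - φ''μ)`, `f = ρb`,
`g = -ρ(aτ + bμ)`. Differentiating `φ² = 1 + |α|²` gives `φφ' = τ` and then
`φ'² + φφ'' = 1 + ⟨α, α''⟩ = 1 + kμ`, since `α'' = kN` for a unit-speed curve. With these,
`EG - F² = (τ² + h²(1 + μ²))/φ²` and the formula for `H` becomes a rational identity. -/

section HelicoidalSurface

variable {α₁ α₂ φ : ℝ → ℝ}

lemma X1_mul_X1_add_X2_mul_X2 (p₁ p₂ q₁ q₂ : ℝ → ℝ) (u v : ℝ) :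
    X1 p₁ p₂ u v * X1 q₁ q₂ u v + X2 p₁ p₂ u v * X2 q₁ q₂ u v = p₁ u * q₁ u + p₂ u * q₂ u := by
  simp only [X1, X2]
  linear_combination (p₁ u * q₁ u + p₂ u * q₂ u) * Real.cos_sq_add_sin_sq v

lemma X1_mul_X2_sub_X2_mul_X1 (p₁ p₂ q₁ q₂ : ℝ → ℝ) (u v : ℝ) :
    X1 p₁ p₂ u v * X2 q₁ q₂ u v - X2 p₁ p₂ u v * X1 q₁ q₂ u v = p₁ u * q₂ u - p₂ u * q₁ u := by
  simp only [X1, X2]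
  linear_combination (p₁ u * q₂ u - p₂ u * q₁ u) * Real.cos_sq_add_sin_sq v

lemma deriv_X1_fst (hd₁ : Differentiable ℝ α₁) (hd₂ : Differentiable ℝ α₂) (u v : ℝ) :
    deriv (fun u => X1 α₁ α₂ u v) u = X1 (deriv α₁) (deriv α₂) u v :=
  (((hd₁ u).hasDerivAt.const_mul _).sub ((hd₂ u).hasDerivAt.const_mul _)).deriv

lemma deriv_X2_fst (hd₁ : Differentiable ℝ α₁) (hd₂ : Differentiable ℝ α₂) (u v : ℝ) :
    deriv (fun u => X2 α₁ α₂ u v) u = X2 (deriv α₁) (deriv α₂) u v :=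
  (((hd₁ u).hasDerivAt.const_mul _).add ((hd₂ u).hasDerivAt.const_mul _)).deriv

lemma deriv_X1_snd (u v : ℝ) :
    deriv (fun v => X1 α₁ α₂ u v) v = -X2 α₁ α₂ u v :=
  (((Real.hasDerivAt_cos v).mul_const _).sub ((Real.hasDerivAt_sin v).mul_const _)).deriv.trans
    (by simp only [X2]; ring)

lemma deriv_X2_snd (u v : ℝ) :
    deriv (fun v => X2 α₁ α₂ u v) v = X1 α₁ α₂ u v :=
  (((Real.hasDerivAt_sin v).mul_const _).add ((Real.hasDerivAt_cos v).mul_const _)).deriv.trans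
    (by simp only [X1]; ring)

lemma tauF_sq_add_muF_sq (u : ℝ) :
    tauF α₁ α₂ u ^ 2 + muF α₁ α₂ u ^ 2
      = (α₁ u ^ 2 + α₂ u ^ 2) * (deriv α₁ u ^ 2 + deriv α₂ u ^ 2) := by
  simp only [tauF, muF]
  ring

lemma deriv_mul_deriv_deriv_add_eq_zero (hdd₁ : Differentiable ℝ (deriv α₁))
    (hdd₂ : Differentiable ℝ (deriv α₂)) (hunit : ∀ u, deriv α₁ u ^ 2 + deriv α₂ u ^ 2 = 1)
    (u : ℝ) : deriv α₁ u * deriv (deriv α₁) u + deriv α₂ u * deriv (deriv α₂) u = 0 := by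
  have hderiv := ((hdd₁ u).hasDerivAt.fun_pow 2).fun_add ((hdd₂ u).hasDerivAt.fun_pow 2)
  have hconst : HasDerivAt (fun x => deriv α₁ x ^ 2 + deriv α₂ x ^ 2) 0 u := by
    simpa only [hunit] using hasDerivAt_const u (1 : ℝ)
  linear_combination hderiv.unique hconst / 2

lemma mul_add_mul_deriv_deriv_eq_curvF_mul_muF {u : ℝ}
    (horth : deriv α₁ u * deriv (deriv α₁) u + deriv α₂ u * deriv (deriv α₂) u = 0)
    (hunit : deriv α₁ u ^ 2 + deriv α₂ u ^ 2 = 1) :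
    α₁ u * deriv (deriv α₁) u + α₂ u * deriv (deriv α₂) u = curvF α₁ α₂ u * muF α₁ α₂ u := by
  simp only [curvF, muF]
  linear_combination (α₁ u * deriv α₁ u + α₂ u * deriv α₂ u) * horth
    - (α₁ u * deriv (deriv α₁) u + α₂ u * deriv (deriv α₂) u) * hunit

lemma mul_deriv_eq_tauF (hd₁ : Differentiable ℝ α₁) (hd₂ : Differentiable ℝ α₂)
    (hdφ : Differentiable ℝ φ) (hhyp : ∀ u, φ u ^ 2 = 1 + (α₁ u ^ 2 + α₂ u ^ 2)) (u : ℝ) :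
    φ u * deriv φ u = tauF α₁ α₂ u := by
  have hlhs := (hdφ u).hasDerivAt.fun_pow 2
  have hrhs := (((hd₁ u).hasDerivAt.fun_pow 2).fun_add ((hd₂ u).hasDerivAt.fun_pow 2)).const_add 1
  rw [show (fun x => φ x ^ 2) = _ from funext hhyp] at hlhs
  simp only [tauF]
  linear_combination hlhs.unique hrhs / 2

lemma deriv_sq_add_mul_deriv_deriv (hd₁ : Differentiable ℝ α₁) (hd₂ : Differentiable ℝ α₂)
    (hdd₁ : Differentiable ℝ (deriv α₁)) (hdd₂ : Differentiable ℝ (deriv α₂))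
    (hdφ : Differentiable ℝ φ) (hddφ : Differentiable ℝ (deriv φ))
    (hunit : ∀ u, deriv α₁ u ^ 2 + deriv α₂ u ^ 2 = 1)
    (hτ : ∀ u, φ u * deriv φ u = tauF α₁ α₂ u) (u : ℝ) :
    deriv φ u ^ 2 + φ u * deriv (deriv φ) u
      = 1 + (α₁ u * deriv (deriv α₁) u + α₂ u * deriv (deriv α₂) u) := by
  have hlhs := (hdφ u).hasDerivAt.fun_mul (hddφ u).hasDerivAt
  have hrhs := ((hd₁ u).hasDerivAt.fun_mul (hdd₁ u).hasDerivAt).fun_add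
    ((hd₂ u).hasDerivAt.fun_mul (hdd₂ u).hasDerivAt)
  rw [show (fun x => φ x * deriv φ x) = _ from funext hτ] at hlhs
  linear_combination hlhs.unique hrhs + hunit u

-- `aT + bN`: rotating it by `e^{vJ}` and scaling by `ρ` gives the horizontal part of `η`.
noncomputable def horizNormal₁ (α₁ α₂ φ : ℝ → ℝ) (u : ℝ) : ℝ :=
  aF α₁ α₂ φ u * deriv α₁ u + bF α₁ α₂ φ u * (-(deriv α₂ u))

noncomputable def horizNormal₂ (α₁ α₂ φ : ℝ → ℝ) (u : ℝ) : ℝ :=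
  aF α₁ α₂ φ u * deriv α₂ u + bF α₁ α₂ φ u * deriv α₁ u

lemma eta1_eq (h : ℝ) (u v : ℝ) : eta1 h α₁ α₂ φ u v =
    rhoF h α₁ α₂ φ u * X1 (horizNormal₁ α₁ α₂ φ) (horizNormal₂ α₁ α₂ φ) u v := rfl

lemma eta2_eq (h : ℝ) (u v : ℝ) : eta2 h α₁ α₂ φ u v =
    rhoF h α₁ α₂ φ u * X2 (horizNormal₁ α₁ α₂ φ) (horizNormal₂ α₁ α₂ φ) u v := rfl

lemma Ecoef_eq (hd₁ : Differentiable ℝ α₁) (hd₂ : Differentiable ℝ α₂) (h u v : ℝ) :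
    Ecoef h α₁ α₂ φ u v = deriv α₁ u ^ 2 + deriv α₂ u ^ 2 - deriv φ u ^ 2 := by
  simp only [Ecoef, deriv_X1_fst hd₁ hd₂, deriv_X2_fst hd₁ hd₂, deriv_const]
  linear_combination X1_mul_X1_add_X2_mul_X2 (deriv α₁) (deriv α₂) (deriv α₁) (deriv α₂) u v

lemma Fcoef_eq (hd₁ : Differentiable ℝ α₁) (hd₂ : Differentiable ℝ α₂) (h u v : ℝ) :
    Fcoef h α₁ α₂ φ u v = -muF α₁ α₂ u := by
  simp only [Fcoef, deriv_X1_fst hd₁ hd₂, deriv_X2_fst hd₁ hd₂, deriv_X1_snd, deriv_X2_snd,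
    deriv_const]
  linear_combination (norm := skip)
    -X1_mul_X2_sub_X2_mul_X1 (deriv α₁) (deriv α₂) α₁ α₂ u v
  simp only [muF]
  ring

lemma Gcoef_eq (h : ℝ) (u v : ℝ) :
    Gcoef h α₁ α₂ φ u v = α₁ u ^ 2 + α₂ u ^ 2 + h ^ 2 := by
  simp only [Gcoef, deriv_X1_snd, deriv_X2_snd, deriv_const, deriv_const_mul_id']
  linear_combination X1_mul_X1_add_X2_mul_X2 α₁ α₂ α₁ α₂ u v

lemma ecoef_eq (hd₁ : Differentiable ℝ α₁) (hd₂ : Differentiable ℝ α₂)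
    (hdd₁ : Differentiable ℝ (deriv α₁)) (hdd₂ : Differentiable ℝ (deriv α₂)) (h u v : ℝ)
    (horth : deriv α₁ u * deriv (deriv α₁) u + deriv α₂ u * deriv (deriv α₂) u = 0) :
    ecoef h α₁ α₂ φ u v = rhoF h α₁ α₂ φ u *
      (bF α₁ α₂ φ u * curvF α₁ α₂ u - deriv (deriv φ) u * muF α₁ α₂ u) := by
  simp only [ecoef, deriv_X1_fst hd₁ hd₂, deriv_X2_fst hd₁ hd₂, deriv_X1_fst hdd₁ hdd₂,
    deriv_X2_fst hdd₁ hdd₂, deriv_const, eta1_eq, eta2_eq]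
  linear_combination (norm := skip) rhoF h α₁ α₂ φ u *
    (X1_mul_X1_add_X2_mul_X2 (deriv (deriv α₁)) (deriv (deriv α₂))
        (horizNormal₁ α₁ α₂ φ) (horizNormal₂ α₁ α₂ φ) u v
      + aF α₁ α₂ φ u * horth)
  simp only [horizNormal₁, horizNormal₂, eta3, curvF]
  ring

lemma fcoef_eq (hd₁ : Differentiable ℝ α₁) (hd₂ : Differentiable ℝ α₂) (h u v : ℝ)
    (hunit : deriv α₁ u ^ 2 + deriv α₂ u ^ 2 = 1) :
    fcoef h α₁ α₂ φ u v = rhoF h α₁ α₂ φ u * bF α₁ α₂ φ u := by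
  simp only [fcoef, deriv_X1_fst hd₁ hd₂, deriv_X2_fst hd₁ hd₂, deriv_X1_snd, deriv_X2_snd,
    deriv_const, eta1_eq, eta2_eq]
  linear_combination (norm := skip) rhoF h α₁ α₂ φ u *
    (X1_mul_X2_sub_X2_mul_X1 (deriv α₁) (deriv α₂)
        (horizNormal₁ α₁ α₂ φ) (horizNormal₂ α₁ α₂ φ) u v
      + bF α₁ α₂ φ u * hunit)
  simp only [horizNormal₁, horizNormal₂]
  ring

lemma gcoef_eq (h u v : ℝ) :
    gcoef h α₁ α₂ φ u v = -rhoF h α₁ α₂ φ u *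
      (aF α₁ α₂ φ u * tauF α₁ α₂ u + bF α₁ α₂ φ u * muF α₁ α₂ u) := by
  simp only [gcoef, deriv_X1_snd, deriv_X2_snd, deriv.fun_neg, deriv_const, deriv_const_mul_id',
    eta1_eq, eta2_eq]
  linear_combination (norm := skip) -rhoF h α₁ α₂ φ u *
    X1_mul_X1_add_X2_mul_X2 α₁ α₂ (horizNormal₁ α₁ α₂ φ) (horizNormal₂ α₁ α₂ φ) u v
  simp only [horizNormal₁, horizNormal₂, tauF, muF]
  ring

end HelicoidalSurface

lemma helicoid_mean_curvature_algebra {p dp ddp k μ τ ρ h : ℝ} (hp : p ≠ 0)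
    (hr : p ^ 2 - 1 = τ ^ 2 + μ ^ 2) (hτ : p * dp = τ) (hddp : dp ^ 2 + p * ddp = 1 + k * μ) :
    ((1 - dp ^ 2) * (-ρ * (μ * dp * τ + (1 + μ ^ 2) / p * μ)) - 2 * (ρ * ((1 + μ ^ 2) / p)) * -μ
        + (p ^ 2 - 1 + h ^ 2) * (ρ * ((1 + μ ^ 2) / p * k - ddp * μ)))
      / (2 * ((1 - dp ^ 2) * (p ^ 2 - 1 + h ^ 2) - (-μ) ^ 2))
    = ρ / p * (((p ^ 2 * k - μ * (1 + μ ^ 2)) * (h ^ 2 + (τ ^ 2 + μ ^ 2))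
        + μ * (1 + μ ^ 2) * p ^ 2) / (2 * (τ ^ 2 + h ^ 2 * (1 + μ ^ 2)))) := by
  have hdp : dp = τ / p := by rw [eq_div_iff hp, ← hτ, mul_comm]
  have hE : 1 - dp ^ 2 = (1 + μ ^ 2) / p ^ 2 := by
    rw [hdp]
    field_simp
    linear_combination hr
  have hddp' : ddp = (k * μ + (1 + μ ^ 2) / p ^ 2) / p := by
    rw [eq_div_iff hp, ← hE]
    linear_combination hddp
  have hden : (1 - dp ^ 2) * (p ^ 2 - 1 + h ^ 2) - (-μ) ^ 2
      = (τ ^ 2 + h ^ 2 * (1 + μ ^ 2)) / p ^ 2 := by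
    rw [hE, hr]
    field_simp
    linear_combination -μ ^ 2 * hr
  have hnum : (1 - dp ^ 2) * (-ρ * (μ * dp * τ + (1 + μ ^ 2) / p * μ))
        - 2 * (ρ * ((1 + μ ^ 2) / p)) * -μ
        + (p ^ 2 - 1 + h ^ 2) * (ρ * ((1 + μ ^ 2) / p * k - ddp * μ))
      = ρ / p ^ 3 * ((p ^ 2 * k - μ * (1 + μ ^ 2)) * (h ^ 2 + (τ ^ 2 + μ ^ 2))
        + μ * (1 + μ ^ 2) * p ^ 2) := by
    rw [hE, hr, hddp', hdp]
    field_simp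
    linear_combination ρ * μ * (1 + μ ^ 2) * hr
  rw [hden, hnum]
  field_simp

theorem mean_curvature_formula_general (h : ℝ) (α₁ α₂ φ : ℝ → ℝ)
    (hα₁ : ContDiff ℝ 2 α₁) (hα₂ : ContDiff ℝ 2 α₂) (hφ : ContDiff ℝ 2 φ)
    (hunit : ∀ u : ℝ, (deriv α₁ u) ^ 2 + (deriv α₂ u) ^ 2 = 1)
    (hhyp : ∀ u : ℝ, (φ u) ^ 2 = 1 + ((α₁ u) ^ 2 + (α₂ u) ^ 2)) :
    ∀ u v : ℝ,
      Hmean h α₁ α₂ φ u v =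
        (rhoF h α₁ α₂ φ u / φ u) *
          ((((φ u) ^ 2 * curvF α₁ α₂ u - muF α₁ α₂ u * (1 + (muF α₁ α₂ u) ^ 2)) *
              (h ^ 2 + ((tauF α₁ α₂ u) ^ 2 + (muF α₁ α₂ u) ^ 2)) +
            muF α₁ α₂ u * (1 + (muF α₁ α₂ u) ^ 2) * (φ u) ^ 2) /
          (2 * ((tauF α₁ α₂ u) ^ 2 + h ^ 2 * (1 + (muF α₁ α₂ u) ^ 2)))) := by
  intro u v
  have hd₁ := hα₁.differentiable two_ne_zero
  have hd₂ := hα₂.differentiable two_ne_zero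
  have hdφ := hφ.differentiable two_ne_zero
  have hdd₁ := hα₁.differentiable_deriv_two
  have hdd₂ := hα₂.differentiable_deriv_two
  have horth := deriv_mul_deriv_deriv_add_eq_zero hdd₁ hdd₂ hunit u
  have hτ := mul_deriv_eq_tauF hd₁ hd₂ hdφ hhyp
  have hφφ'' := deriv_sq_add_mul_deriv_deriv hd₁ hd₂ hdd₁ hdd₂ hdφ
    hφ.differentiable_deriv_two hunit hτ u
  rw [mul_add_mul_deriv_deriv_eq_curvF_mul_muF horth (hunit u)] at hφφ''
  have hr : α₁ u ^ 2 + α₂ u ^ 2 = φ u ^ 2 - 1 := by linear_combination -hhyp u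
  have hφ₀ : φ u ≠ 0 := fun hzero => by
    nlinarith [hhyp u, hzero, sq_nonneg (α₁ u), sq_nonneg (α₂ u)]
  rw [Hmean, Ecoef_eq hd₁ hd₂, hunit u, Fcoef_eq hd₁ hd₂, Gcoef_eq, hr,
    ecoef_eq hd₁ hd₂ hdd₁ hdd₂ h u v horth, fcoef_eq hd₁ hd₂ h u v (hunit u), gcoef_eq, aF, bF]
  refine helicoid_mean_curvature_algebra hφ₀ ?_ (hτ u) hφφ''
  rw [tauF_sq_add_muF_sq, hunit u, hr, mul_one]

/-- the mean curvature of an `h`-pitched helicoidal surface in `ℍ²×ℝ`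
satisfies `H = (ρ/φ)·((φ²k − μ(1+μ²))(h² + r²) + μ(1+μ²)φ²)/(2(τ² + h²(1+μ²)))`. -/
theorem mean_curvature_formula (h : ℝ) (hh : 0 < h) (α₁ α₂ φ : ℝ → ℝ)
    (hα₁ : ContDiff ℝ 2 α₁) (hα₂ : ContDiff ℝ 2 α₂) (hφ : ContDiff ℝ 2 φ)
    (hunit : ∀ u : ℝ, (deriv α₁ u) ^ 2 + (deriv α₂ u) ^ 2 = 1)
    (hhyp : ∀ u : ℝ, (φ u) ^ 2 = 1 + ((α₁ u) ^ 2 + (α₂ u) ^ 2))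
    (hpos : ∀ u : ℝ, 0 < φ u) :
    ∀ u v : ℝ,
      Hmean h α₁ α₂ φ u v =
        (rhoF h α₁ α₂ φ u / φ u) *
          ((((φ u) ^ 2 * curvF α₁ α₂ u - muF α₁ α₂ u * (1 + (muF α₁ α₂ u) ^ 2)) *
              (h ^ 2 + ((tauF α₁ α₂ u) ^ 2 + (muF α₁ α₂ u) ^ 2)) +
            muF α₁ α₂ u * (1 + (muF α₁ α₂ u) ^ 2) * (φ u) ^ 2) /
          (2 * ((tauF α₁ α₂ u) ^ 2 + h ^ 2 * (1 + (muF α₁ α₂ u) ^ 2)))) :=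
  mean_curvature_formula_general h α₁ α₂ φ hα₁ hα₂ hφ hunit hhyp
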